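/- arXiv:0909.4242 — 5 statements merged into one kernel-verified Lean document; each statement's English description precedes it below -/
import Mathlib

section
/- Let L be the first-order language of groups and let G be a group, regarded as an L-structure. Assume G is inp-minimal. Then there exists a subgroup H of G such that: H is normal in G, H is abelian, the underlying set of H is definable in G by an L-formula without parameters, and there is an integer n ≥ 1 with g^n ∈ H for every g ∈ G (i.e., the quotient G/H has finite exponent). -/
open FirstOrder FirstOrder.Language

universe u v w

/-- `N` carries an inp-pattern of length two (in a single free variable). -/
def HasInpPattern (L : FirstOrder.Language.{v, w}) (N : Type*) [L.Structure N] : Prop :=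
  ∃ (m₁ m₂ k₁ k₂ : ℕ) (φ : L.Formula (Unit ⊕ Fin m₁)) (ψ : L.Formula (Unit ⊕ Fin m₂))
    (a : ℕ → Fin m₁ → N) (b : ℕ → Fin m₂ → N),
    2 ≤ k₁ ∧ 2 ≤ k₂ ∧
    (∀ (c : N) (s : Finset ℕ),
      (∀ i ∈ s, φ.Realize (Sum.elim (fun _ => c) (a i))) → s.card < k₁) ∧
    (∀ (c : N) (s : Finset ℕ),
      (∀ j ∈ s, ψ.Realize (Sum.elim (fun _ => c) (b j))) → s.card < k₂) ∧
    (∀ i j : ℕ, ∃ c : N,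
      φ.Realize (Sum.elim (fun _ => c) (a i)) ∧ ψ.Realize (Sum.elim (fun _ => c) (b j)))

/-- `M` is inp-minimal: no structure elementarily equivalent to `M` carries an
inp-pattern of length two in a single free variable. -/
def IsInpMinimal (L : FirstOrder.Language.{v, w}) (M : Type u) [L.Structure M] : Prop :=
  ∀ (N : Type (max u v w)) (S : L.Structure N),
    L.completeTheory M = @Language.completeTheory L N S → ¬ @HasInpPattern L N S

/-- The first-order language of groups: a binary operation, a unary inverse, a constant. -/
def groupLang : Language where
  Functions := fun n =>
    match n with
    | 0 => Unit
    | 1 => Unit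
    | 2 => Unit
    | _ => Empty
  Relations := fun _ => Empty

/-- A group, regarded as a `groupLang`-structure. -/
instance groupLangStructure (G : Type u) [Group G] : groupLang.Structure G where
  funMap {n} f :=
    match n, f with
    | 0, _ => fun _ => (1 : G)
    | 1, _ => fun x => (x 0)⁻¹
    | 2, _ => fun x => x 0 * x 1
    | (_ + 3), f => Empty.elim f
  RelMap {n} r := Empty.elim r

/-!
If no positive power of `a` commutes with `b` and no positive power of `b` commutes with `a`, the
formulas "`x a⁻ⁱ` commutes with `b`" and "`b⁻ʲ x` commutes with `a`" form an inp-pattern: two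
solutions of one row would put a positive power of `a` (resp. `b`) into `C(b)` (resp. `C(a)`), while
`bʲ aⁱ` realizes every path. Hence in a group without inp-patterns any `a, b` have commuting powers
`aᵏ, bᵏ`. Applying this in an ultrapower of `G` to sequences of counterexamples for the exponents
`K!` yields a single `n` with `[gⁿ, hⁿ] = 1` for all `g, h`. Then `A = C({gⁿ})` is a definable
normal subgroup containing all `gⁿ`, and its center `A ∩ C(A)` is the required subgroup.
-/

open Filter Subgroup

namespace Subgroup

variable (G : Type*) [Group G]

def powCentralizer (n : ℕ) : Subgroup G :=
  centralizer (Set.range (· ^ n))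

variable {G}

lemma mem_powCentralizer {n : ℕ} {x : G} :
    x ∈ powCentralizer G n ↔ ∀ w : G, Commute (w ^ n) x := by
  simp [powCentralizer, mem_centralizer_iff, Commute, SemiconjBy]

instance normal_powCentralizer (n : ℕ) : (powCentralizer G n).Normal where
  conj_mem x hx g := mem_powCentralizer.2 fun w => by
    have := (Commute.conj_iff g).2 (mem_powCentralizer.1 hx (g⁻¹ * w * g⁻¹⁻¹))
    rw [conj_pow] at this
    simpa [mul_assoc] using this

lemma pow_mem_centralizer_powCentralizer (n : ℕ) (g : G) :
    g ^ n ∈ centralizer (powCentralizer G n : Set G) :=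
  mem_centralizer_iff.2 fun _ hx => (mem_powCentralizer.1 hx g).symm.eq

lemma exists_pow_mem_of_pow_mul_inv_pow_mem {H : Subgroup G} {a : G} {i j : ℕ} (hij : i ≠ j)
    (h : a ^ i * (a ^ j)⁻¹ ∈ H) : ∃ k, 0 < k ∧ a ^ k ∈ H := by
  rcases hij.lt_or_gt with hlt | hlt
  · exact ⟨j - i, by omega, by simpa [pow_sub a hlt.le] using H.inv_mem h⟩
  · exact ⟨i - j, by omega, by rwa [pow_sub a hlt.le]⟩

lemma card_lt_two_of_forall_mul_inv_pow_mem {H : Subgroup G} {a c : G}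
    (ha : ∀ k, 0 < k → a ^ k ∉ H) {s : Finset ℕ} (hs : ∀ i ∈ s, c * (a ^ i)⁻¹ ∈ H) :
    s.card < 2 := by
  by_contra! h
  obtain ⟨i, hi, j, hj, hij⟩ := Finset.one_lt_card.1 h
  have hmem : a ^ i * (a ^ j)⁻¹ ∈ H := by
    simpa [mul_assoc] using H.mul_mem (H.inv_mem (hs i hi)) (hs j hj)
  obtain ⟨k, hk, hak⟩ := exists_pow_mem_of_pow_mul_inv_pow_mem hij hmem
  exact ha k hk hak

lemma card_lt_two_of_forall_inv_pow_mul_mem {H : Subgroup G} {a c : G}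
    (ha : ∀ k, 0 < k → a ^ k ∉ H) {s : Finset ℕ} (hs : ∀ i ∈ s, (a ^ i)⁻¹ * c ∈ H) :
    s.card < 2 :=
  card_lt_two_of_forall_mul_inv_pow_mem (a := a⁻¹) (c := c⁻¹)
    (fun k hk hak => ha k hk (by simpa using H.inv_mem hak))
    (fun i hi => by simpa using H.inv_mem (hs i hi))

end Subgroup

namespace groupLang

section Formulas

variable {α : Type*} {k : ℕ}

def mulTerm (t s : groupLang.Term α) : groupLang.Term α :=
  Term.func (L := groupLang) (l := 2) () ![t, s]

def oneTerm : groupLang.Term α := Term.func (L := groupLang) (l := 0) () ![]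

def invTerm (t : groupLang.Term α) : groupLang.Term α :=
  Term.func (L := groupLang) (l := 1) () ![t]

def powTerm (t : groupLang.Term α) : ℕ → groupLang.Term α
  | 0 => oneTerm
  | m + 1 => mulTerm (powTerm t m) t

def commFormula (t s : groupLang.Term (α ⊕ Fin k)) : groupLang.BoundedFormula α k :=
  (mulTerm t s).bdEqual (mulTerm s t)

def commPowFormula (n : ℕ) (t : groupLang.Term (α ⊕ Fin k)) : groupLang.BoundedFormula α k :=
  ∀' commFormula (powTerm &(Fin.last k) n) (t.relabel (Sum.map id Fin.castSucc))

def mulInvCommFormula : groupLang.Formula (Unit ⊕ Fin 2) :=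
  commFormula (mulTerm (var (.inl (.inl ()))) (invTerm (var (.inl (.inr 0)))))
    (var (.inl (.inr 1)))

def invMulCommFormula : groupLang.Formula (Unit ⊕ Fin 2) :=
  commFormula (mulTerm (invTerm (var (.inl (.inr 0)))) (var (.inl (.inl ()))))
    (var (.inl (.inr 1)))

variable {G : Type u} [Group G]

@[simp] lemma realize_mulTerm (v : α → G) (t s : groupLang.Term α) :
    (mulTerm t s).realize v = t.realize v * s.realize v := rfl

@[simp] lemma realize_oneTerm (v : α → G) : (oneTerm : groupLang.Term α).realize v = 1 := rfl

@[simp] lemma realize_invTerm (v : α → G) (t : groupLang.Term α) :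
    (invTerm t).realize v = (t.realize v)⁻¹ := rfl

@[simp] lemma realize_powTerm (v : α → G) (t : groupLang.Term α) (m : ℕ) :
    (powTerm t m).realize v = t.realize v ^ m := by
  induction m with
  | zero => simp [powTerm]
  | succ m ih => simp [powTerm, ih, pow_succ]

@[simp] lemma realize_commFormula (v : α → G) (xs : Fin k → G)
    (t s : groupLang.Term (α ⊕ Fin k)) :
    (commFormula t s).Realize v xs ↔
      Commute (t.realize (Sum.elim v xs)) (s.realize (Sum.elim v xs)) := by
  simp [commFormula, Commute, SemiconjBy]

@[simp] lemma realize_commPowFormula (v : α → G) (xs : Fin k → G) (n : ℕ)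
    (t : groupLang.Term (α ⊕ Fin k)) :
    (commPowFormula n t).Realize v xs ↔ t.realize (Sum.elim v xs) ∈ powCentralizer G n := by
  simp [commPowFormula, mem_powCentralizer, Sum.elim_comp_map, Fin.snoc_comp_castSucc]

@[simp] lemma realize_mulInvCommFormula (c : G) (p : Fin 2 → G) :
    mulInvCommFormula.Realize (Sum.elim (fun _ => c) p) ↔ c * (p 0)⁻¹ ∈ centralizer {p 1} := by
  simp [mulInvCommFormula, Formula.Realize, mem_centralizer_singleton_iff, Commute, SemiconjBy]

@[simp] lemma realize_invMulCommFormula (c : G) (p : Fin 2 → G) :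
    invMulCommFormula.Realize (Sum.elim (fun _ => c) p) ↔ (p 0)⁻¹ * c ∈ centralizer {p 1} := by
  simp [invMulCommFormula, Formula.Realize, mem_centralizer_singleton_iff, Commute, SemiconjBy]

end Formulas

variable {G : Type u} [Group G]

lemma exists_formula_realize_iff_mem_center_powCentralizer (n : ℕ) :
    ∃ φ : groupLang.Formula (Fin 1), ∀ g : G,
      g ∈ powCentralizer G n ⊓ centralizer (powCentralizer G n) ↔ φ.Realize (fun _ => g) := by
  refine ⟨commPowFormula n (var (Sum.inl 0)) ⊓
    ∀' (commPowFormula n &0 ⟹ commFormula &0 (var (Sum.inl 0))), fun g => ?_⟩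
  simp [Formula.Realize, mem_centralizer_iff, Fin.snoc, Commute, SemiconjBy]

lemma hasInpPattern_of_forall_pow_notMem_centralizer {a b : G}
    (ha : ∀ k, 0 < k → a ^ k ∉ centralizer {b}) (hb : ∀ k, 0 < k → b ^ k ∉ centralizer {a}) :
    HasInpPattern groupLang G := by
  refine ⟨2, 2, 2, 2, mulInvCommFormula, invMulCommFormula, fun i => ![a ^ i, b],
    fun j => ![b ^ j, a], le_rfl, le_rfl, fun c s hs => ?_, fun c s hs => ?_, fun i j => ?_⟩
  · simp only [realize_mulInvCommFormula] at hs
    exact card_lt_two_of_forall_mul_inv_pow_mem ha hs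
  · simp only [realize_invMulCommFormula] at hs
    exact card_lt_two_of_forall_inv_pow_mul_mem hb hs
  · refine ⟨b ^ j * a ^ i, ?_, ?_⟩ <;>
      simp only [realize_mulInvCommFormula, realize_invMulCommFormula]
    · simpa using pow_mem (mem_centralizer_singleton_iff.2 rfl) j
    · simpa using pow_mem (mem_centralizer_singleton_iff.2 rfl) i

lemma exists_pow_commute_of_not_hasInpPattern (h : ¬ HasInpPattern groupLang G) (a b : G) :
    ∃ k, 0 < k ∧ Commute (a ^ k) (b ^ k) := by
  by_contra! hab
  refine h (hasInpPattern_of_forall_pow_notMem_centralizer (a := a) (b := b)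
    (fun k hk hak => ?_) fun k hk hbk => ?_)
  · exact hab k hk (Commute.pow_right (mem_centralizer_singleton_iff.1 hak) k)
  · exact hab k hk (Commute.pow_right (mem_centralizer_singleton_iff.1 hbk) k).symm

section Ultrapower

variable {α : Type*} (U : Ultrafilter α) (G : Type u) [Group G]

def germEquivProduct : Germ (U : Filter α) G ≃[groupLang] (U : Filter α).Product fun _ => G where
  toEquiv := Equiv.refl _
  map_fun' {n} f x := by
    obtain ⟨r, rfl⟩ : ∃ r : Fin n → α → G, x = fun i => (r i : Germ (U : Filter α) G) :=
      ⟨fun i => (x i).out, funext fun i => (Quotient.out_eq _).symm⟩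
    refine Eq.trans ?_ (Language.Ultraproduct.funMap_cast f r).symm
    match n, f with
    | 0, _ | 1, _ | 2, _ => rfl
    | _ + 3, f => exact f.elim
  map_rel' r := r.elim

lemma completeTheory_germ :
    groupLang.completeTheory (Germ (U : Filter α) G) = groupLang.completeTheory G := by
  have hprod : groupLang.ElementarilyEquivalent ((U : Filter α).Product fun _ => G) G :=
    elementarilyEquivalent_iff.2 fun φ => by
      rw [Language.Ultraproduct.sentence_realize, eventually_const]
  exact (StrongHomClass.elementarilyEquivalent (germEquivProduct U G)).trans hprod

end Ultrapower

lemma exists_pow_eventually_commute (hG : IsInpMinimal groupLang G) (U : Ultrafilter ℕ)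
    (g h : ℕ → G) : ∃ k, 0 < k ∧ ∀ᶠ K in (U : Filter ℕ), Commute (g K ^ k) (h K ^ k) := by
  obtain ⟨k, hk, hcomm⟩ := exists_pow_commute_of_not_hasInpPattern
    (hG _ _ (completeTheory_germ U G).symm) (g : Germ (U : Filter ℕ) G) h
  exact ⟨k, hk, Germ.coe_eq.1 (by exact_mod_cast hcomm.eq)⟩

lemma exists_pow_commute_uniform (hG : IsInpMinimal groupLang G) :
    ∃ n, 0 < n ∧ ∀ g h : G, Commute (g ^ n) (h ^ n) := by
  by_contra! hne
  choose g h hgh using fun K : ℕ => hne K.factorial K.factorial_pos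
  obtain ⟨k, hk, hev⟩ := exists_pow_eventually_commute hG (hyperfilter ℕ) g h
  obtain ⟨K, hkK, hK⟩ :=
    (((eventually_ge_atTop k).filter_mono Nat.hyperfilter_le_atTop).and hev).exists
  obtain ⟨m, hm⟩ := Nat.dvd_factorial hk hkK
  exact hgh K (by rw [hm, pow_mul, pow_mul]; exact hK.pow_pow m m)

end groupLang

theorem statement_0 (G : Type u) [Group G] (hG : IsInpMinimal groupLang G) :
    ∃ H : Subgroup G, H.Normal ∧ (∀ a ∈ H, ∀ b ∈ H, a * b = b * a) ∧
      (∃ φ : groupLang.Formula (Fin 1), ∀ g : G, g ∈ H ↔ φ.Realize (fun _ => g)) ∧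
      ∃ n : ℕ, 1 ≤ n ∧ ∀ g : G, g ^ n ∈ H := by
  obtain ⟨n, hn, hcomm⟩ := groupLang.exists_pow_commute_uniform hG
  refine ⟨powCentralizer G n ⊓ centralizer (powCentralizer G n), inferInstance,
    fun a ha b hb => mem_centralizer_iff.1 hb.2 a ha.1,
    groupLang.exists_formula_realize_iff_mem_center_powCentralizer n, n, hn, fun g => ?_⟩
  exact ⟨mem_powCentralizer.2 fun w => hcomm w g, pow_mem_centralizer_powCentralizer n g⟩
end

section
/- Let L be a first-order language whose symbols are unary and binary relation symbols only (no function or constant symbols), and let M be an L-structure such that: some binary relation symbol is interpreted as a linear order ≤ on M; every binary relation symbol of L is interpreted by a relation R that is monotone with respect to ≤ (x₁ ≤ x, R(x,y) and y ≤ y₁ imply R(x₁, y₁)); every subset of M definable without parameters is the interpretation of some unary relation symbol of L; and every binary relation on M that is definable without parameters and monotone with respect to ≤ is the interpretation of some binary relation symbol of L. Then the complete theory of M eliminates quantifiers: every L-formula with at least one free variable is equivalent, in every model of Th(M), to a quantifier-free L-formula with the same free variables. -/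
/-!
Eliminating one existential quantifier from a quantifier-free formula reduces, via disjunctive
normal form, to `∃ y` over a conjunction of literals. With no function symbols, a literal
mentioning `y` either constrains `y` alone or is `R(t, y)` or `R(y, t)` for a binary symbol `R`:
equality is `t ≤ y ∧ y ≤ t`, and `¬R(t, y)` is a monotone definable relation in `(y, t)`, hence
again a symbol. For monotone `R` the set `{y | R(t, y)}` is an upper set, and the upper sets of a
linear order form a chain, so all lower bounds `R(t, y)` follow from the strongest one, and dually
for the upper bounds `S(y, t)`. "The bound `R(a, y)` is the strongest" and
"`∃ y, C(y) ∧ R(a, y) ∧ S(y, b)`" are monotone definable relations between the parameters, so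
symbols name them and the existential formula becomes quantifier-free.
-/

open FirstOrder FirstOrder.Language BoundedFormula Structure

universe u v w

section Order

variable {β : Type*}

def MonotoneRel [LE β] (R : β → β → Prop) : Prop :=
  ∀ x x₁ y y₁ : β, x₁ ≤ x → R x y → y ≤ y₁ → R x₁ y₁

theorem MonotoneRel.isUpperSet_setOf [Preorder β] {R : β → β → Prop} (h : MonotoneRel R)
    (x : β) : IsUpperSet {y | R x y} :=
  fun _ _ hy hR => h _ _ _ _ le_rfl hR hy

theorem MonotoneRel.isLowerSet_setOf [Preorder β] {R : β → β → Prop} (h : MonotoneRel R)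
    (y : β) : IsLowerSet {x | R x y} :=
  fun _ _ hx hR => h _ _ _ _ hx hR le_rfl

theorem List.exists_mem_forall_subset {ι : Type*} {l : List ι} (hl : l ≠ []) (s : ι → Set β)
    (htotal : ∀ i ∈ l, ∀ j ∈ l, s i ⊆ s j ∨ s j ⊆ s i) : ∃ i ∈ l, ∀ j ∈ l, s i ⊆ s j := by
  obtain ⟨i, hi, hmin⟩ := l.finite_toSet.exists_minimalFor s _ (List.exists_mem_of_ne_nil l hl)
  exact ⟨i, hi, fun j hj => (htotal i hi j hj).elim id (hmin hj)⟩

theorem exists_mem_forall_iff_of_isUpperSet_of_isLowerSet [LinearOrder β] {ι κ : Type*}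
    {lo : List ι} {up : List κ} (hlo : lo ≠ []) (hup : up ≠ []) (U : ι → Set β) (D : κ → Set β)
    (hU : ∀ i ∈ lo, IsUpperSet (U i)) (hD : ∀ j ∈ up, IsLowerSet (D j)) (C : Set β) :
    (∃ y ∈ C, (∀ i ∈ lo, y ∈ U i) ∧ ∀ j ∈ up, y ∈ D j) ↔
      ∃ i ∈ lo, ∃ j ∈ up, (∀ i' ∈ lo, U i ⊆ U i') ∧ (∀ j' ∈ up, D j ⊆ D j') ∧
        (C ∩ U i ∩ D j).Nonempty := by
  constructor
  · rintro ⟨y, hC, hyU, hyD⟩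
    obtain ⟨i, hi, hiU⟩ := lo.exists_mem_forall_subset hlo U fun i hi j hj =>
      (hU i hi).total (hU j hj)
    obtain ⟨j, hj, hjD⟩ := up.exists_mem_forall_subset hup D fun i hi j hj =>
      (hD i hi).total (hD j hj)
    exact ⟨i, hi, j, hj, hiU, hjD, y, ⟨hC, hyU i hi⟩, hyD j hj⟩
  · rintro ⟨i, -, j, -, hiU, hjD, y, ⟨hC, hyU⟩, hyD⟩
    exact ⟨y, hC, fun i' hi' => hiU i' hi' hyU, fun j' hj' => hjD j' hj' hyD⟩

end Order

theorem Sum.eq_inr_last_or_exists_eq_map_castSucc {α : Type*} {k : ℕ} (x : α ⊕ Fin (k + 1)) :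
    x = Sum.inr (Fin.last k) ∨ ∃ x', x = Sum.map id Fin.castSucc x' := by
  rcases x with a | i
  · exact .inr ⟨.inl a, rfl⟩
  · induction i using Fin.lastCases with
    | last => exact .inl rfl
    | cast i => exact .inr ⟨.inr i, rfl⟩

@[simp]
theorem Sum.elim_snoc_map_castSucc {α M : Type*} {k : ℕ} (v : α → M) (xs : Fin k → M) (y : M)
    (x : α ⊕ Fin k) :
    Sum.elim v (Fin.snoc xs y) (Sum.map id Fin.castSucc x) = Sum.elim v xs x := by
  cases x <;> simp

namespace FirstOrder.Language

variable {L : Language} {M : Type*} [L.Structure M] {α : Type*} {k : ℕ}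

variable (L) in
def IsQFDefinable (P : (α → M) → (Fin k → M) → Prop) : Prop :=
  ∃ χ : L.BoundedFormula α k, χ.IsQF ∧ ∀ v xs, χ.Realize v xs ↔ P v xs

theorem BoundedFormula.IsQF.isQFDefinable {χ : L.BoundedFormula α k} (h : χ.IsQF) :
    IsQFDefinable L (χ.Realize : (α → M) → _) :=
  ⟨χ, h, fun _ _ => Iff.rfl⟩

theorem isQFDefinable_relMap₂ (R : L.Relations 2) (a b : α ⊕ Fin k) :
    IsQFDefinable L fun (v : α → M) xs => RelMap R ![Sum.elim v xs a, Sum.elim v xs b] :=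
  ⟨R.boundedFormula₂ (var a) (var b), (IsAtomic.rel _ _).isQF, by simp⟩

namespace IsQFDefinable

variable {P Q : (α → M) → (Fin k → M) → Prop}

theorem of_iff (h : IsQFDefinable L P) (hPQ : ∀ v xs, P v xs ↔ Q v xs) : IsQFDefinable L Q := by
  obtain ⟨χ, hχ, hP⟩ := h
  exact ⟨χ, hχ, fun v xs => (hP v xs).trans (hPQ v xs)⟩

theorem not (h : IsQFDefinable L P) : IsQFDefinable L fun v xs => ¬P v xs := by
  obtain ⟨χ, hχ, hP⟩ := h
  exact ⟨χ.not, hχ.not, by simp [hP]⟩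

theorem imp (hP : IsQFDefinable L P) (hQ : IsQFDefinable L Q) :
    IsQFDefinable L fun v xs => P v xs → Q v xs := by
  obtain ⟨χ₁, hχ₁, hP⟩ := hP
  obtain ⟨χ₂, hχ₂, hQ⟩ := hQ
  exact ⟨χ₁.imp χ₂, hχ₁.imp hχ₂, by simp [hP, hQ]⟩

theorem and (hP : IsQFDefinable L P) (hQ : IsQFDefinable L Q) :
    IsQFDefinable L fun v xs => P v xs ∧ Q v xs := by
  obtain ⟨χ₁, hχ₁, hP⟩ := hP
  obtain ⟨χ₂, hχ₂, hQ⟩ := hQ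
  exact ⟨χ₁ ⊓ χ₂, hχ₁.inf hχ₂, by simp [hP, hQ]⟩

theorem or (hP : IsQFDefinable L P) (hQ : IsQFDefinable L Q) :
    IsQFDefinable L fun v xs => P v xs ∨ Q v xs :=
  (hP.not.imp hQ).of_iff fun _ _ => or_iff_not_imp_left.symm

theorem list_exists {ι : Type*} (l : List ι) {P : ι → (α → M) → (Fin k → M) → Prop}
    (h : ∀ i ∈ l, IsQFDefinable L (P i)) : IsQFDefinable L fun v xs => ∃ i ∈ l, P i v xs := by
  induction l with
  | nil => exact ⟨⊥, isQF_bot, by simp⟩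
  | cons i l ih =>
    exact ((h i (by simp)).or (ih fun j hj => h j (by simp [hj]))).of_iff
      fun v xs => by simp

theorem list_forall {ι : Type*} (l : List ι) {P : ι → (α → M) → (Fin k → M) → Prop}
    (h : ∀ i ∈ l, IsQFDefinable L (P i)) : IsQFDefinable L fun v xs => ∀ i ∈ l, P i v xs :=
  (list_exists l fun i hi => (h i hi).not).not.of_iff fun v xs => by simp

end IsQFDefinable

/-- A conjunction of literals in the variable `y` to be eliminated, sorted by how they mention
`y`: not at all (`side`), alone (`color`), as `R(t, y)` (`lower`) or as `R(y, t)` (`upper`). -/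
structure Cell (L : Language) (α : Type*) (k : ℕ) where
  side : L.BoundedFormula α k
  isQF_side : side.IsQF
  color : L.Formula (Fin 1)
  lower : List (L.Relations 2 × (α ⊕ Fin k))
  upper : List (L.Relations 2 × (α ⊕ Fin k))

namespace Cell

def Realize (c : Cell L α k) (v : α → M) (xs : Fin k → M) (y : M) : Prop :=
  c.side.Realize v xs ∧ c.color.Realize (fun _ => y) ∧
    (∀ p ∈ c.lower, RelMap p.1 ![Sum.elim v xs p.2, y]) ∧
    ∀ p ∈ c.upper, RelMap p.1 ![y, Sum.elim v xs p.2]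

def top : Cell L α k := ⟨⊤, IsQF.top, ⊤, [], []⟩

def inf (c d : Cell L α k) : Cell L α k :=
  ⟨c.side ⊓ d.side, c.isQF_side.inf d.isQF_side, c.color ⊓ d.color, c.lower ++ d.lower,
    c.upper ++ d.upper⟩

@[simp]
theorem realize_top (v : α → M) (xs : Fin k → M) (y : M) :
    (top : Cell L α k).Realize v xs y := by
  simp [Realize, top]

@[simp]
theorem realize_inf (c d : Cell L α k) (v : α → M) (xs : Fin k → M) (y : M) :
    (c.inf d).Realize v xs y ↔ c.Realize v xs y ∧ d.Realize v xs y := by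
  simp only [Realize, inf, BoundedFormula.realize_inf, Formula.realize_inf, List.mem_append,
    or_imp, forall_and]
  tauto

end Cell

variable (L) in
def IsCellDefinable (P : (α → M) → (Fin k → M) → M → Prop) : Prop :=
  ∃ D : List (Cell L α k), ∀ v xs y, P v xs y ↔ ∃ c ∈ D, c.Realize v xs y

namespace IsCellDefinable

variable {P Q : (α → M) → (Fin k → M) → M → Prop}

theorem of_iff (h : IsCellDefinable L P) (hPQ : ∀ v xs y, P v xs y ↔ Q v xs y) :
    IsCellDefinable L Q := by
  obtain ⟨D, hD⟩ := h
  exact ⟨D, fun v xs y => (hPQ v xs y).symm.trans (hD v xs y)⟩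

theorem cell (c : Cell L α k) : IsCellDefinable L (c.Realize : (α → M) → _) :=
  ⟨[c], by simp⟩

theorem or (hP : IsCellDefinable L P) (hQ : IsCellDefinable L Q) :
    IsCellDefinable L fun v xs y => P v xs y ∨ Q v xs y := by
  obtain ⟨D₁, hD₁⟩ := hP
  obtain ⟨D₂, hD₂⟩ := hQ
  exact ⟨D₁ ++ D₂, by simp [hD₁, hD₂, or_and_right, exists_or]⟩

theorem and (hP : IsCellDefinable L P) (hQ : IsCellDefinable L Q) :
    IsCellDefinable L fun v xs y => P v xs y ∧ Q v xs y := by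
  obtain ⟨D₁, hD₁⟩ := hP
  obtain ⟨D₂, hD₂⟩ := hQ
  refine ⟨D₁.flatMap fun c => D₂.map c.inf, fun v xs y => ?_⟩
  simp only [hD₁, hD₂, List.mem_flatMap, List.mem_map]
  constructor
  · rintro ⟨⟨c, hc, hcy⟩, d, hd, hdy⟩
    exact ⟨c.inf d, ⟨c, hc, d, hd, rfl⟩, (c.realize_inf d v xs y).2 ⟨hcy, hdy⟩⟩
  · rintro ⟨_, ⟨c, hc, d, hd, rfl⟩, hcd⟩
    rw [Cell.realize_inf] at hcd
    exact ⟨⟨c, hc, hcd.1⟩, d, hd, hcd.2⟩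

theorem list_exists {ι : Type*} (l : List ι) {P : ι → (α → M) → (Fin k → M) → M → Prop}
    (h : ∀ i ∈ l, IsCellDefinable L (P i)) :
    IsCellDefinable L fun v xs y => ∃ i ∈ l, P i v xs y := by
  induction l with
  | nil => exact ⟨[], by simp⟩
  | cons i l ih =>
    exact ((h i (by simp)).or (ih fun j hj => h j (by simp [hj]))).of_iff fun v xs y => by simp

theorem list_forall {ι : Type*} (l : List ι) {P : ι → (α → M) → (Fin k → M) → M → Prop}
    (h : ∀ i ∈ l, IsCellDefinable L (P i)) :
    IsCellDefinable L fun v xs y => ∀ i ∈ l, P i v xs y := by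
  induction l with
  | nil => exact (cell Cell.top).of_iff (by simp)
  | cons i l ih =>
    exact ((h i (by simp)).and (ih fun j hj => h j (by simp [hj]))).of_iff fun v xs y => by simp

theorem side {P₀ : (α → M) → (Fin k → M) → Prop} (h : IsQFDefinable L P₀) :
    IsCellDefinable L fun v xs (_ : M) => P₀ v xs := by
  obtain ⟨χ, hχ, hP⟩ := h
  exact (cell { Cell.top with side := χ, isQF_side := hχ }).of_iff
    fun v xs y => by simp [Cell.Realize, Cell.top, hP]

theorem color (C : L.Formula (Fin 1)) :
    IsCellDefinable L fun (_ : α → M) (_ : Fin k → M) y => C.Realize fun _ => y :=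
  (cell { Cell.top with color := C }).of_iff fun _ _ _ => by simp [Cell.Realize, Cell.top]

theorem lower (R : L.Relations 2) (t : α ⊕ Fin k) :
    IsCellDefinable L fun (v : α → M) xs y => RelMap R ![Sum.elim v xs t, y] :=
  (cell { Cell.top with lower := [(R, t)] }).of_iff fun _ _ _ => by simp [Cell.Realize, Cell.top]

theorem upper (R : L.Relations 2) (t : α ⊕ Fin k) :
    IsCellDefinable L fun (v : α → M) xs y => RelMap R ![y, Sum.elim v xs t] :=
  (cell { Cell.top with upper := [(R, t)] }).of_iff fun _ _ _ => by simp [Cell.Realize, Cell.top]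

theorem not (hneg : ∀ R : L.Relations 2, ∃ R' : L.Relations 2,
      ∀ a b : M, RelMap R' ![a, b] ↔ ¬RelMap R ![b, a])
    (h : IsCellDefinable L P) : IsCellDefinable L fun v xs y => ¬P v xs y := by
  choose neg hneg using hneg
  have not_cell (c : Cell L α k) : IsCellDefinable L fun (v : α → M) xs y => ¬c.Realize v xs y :=
    ((side c.isQF_side.not.isQFDefinable).or ((color c.color.not).or
      ((list_exists c.lower fun p _ => upper (neg p.1) p.2).or
        (list_exists c.upper fun p _ => lower (neg p.1) p.2)))).of_iff
      fun v xs y => by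
        simp only [Cell.Realize, hneg, not_and_or, not_forall, exists_prop, realize_not,
          Formula.realize_not]
  obtain ⟨D, hD⟩ := h
  exact (list_forall D fun c _ => not_cell c).of_iff fun v xs y => by simp [hD]

end IsCellDefinable

variable (L M) in
structure NamesMonotoneRelations [LE M] : Prop where
  monotoneRel_relMap : ∀ R : L.Relations 2, MonotoneRel fun x y : M => RelMap R ![x, y]
  exists_relMap_iff : ∀ φ : L.Formula (Fin 2), MonotoneRel (fun x y : M => φ.Realize ![x, y]) →
    ∃ R : L.Relations 2, ∀ x y : M, φ.Realize ![x, y] ↔ RelMap R ![x, y]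

namespace NamesMonotoneRelations

variable [Preorder M]

theorem exists_relMap_iff_of_realize (hM : NamesMonotoneRelations L M) {P : M → M → Prop}
    (φ : L.Formula (Fin 2)) (hφ : ∀ x y, φ.Realize ![x, y] ↔ P x y) (hP : MonotoneRel P) :
    ∃ R : L.Relations 2, ∀ x y, RelMap R ![x, y] ↔ P x y := by
  obtain ⟨R, hR⟩ := hM.exists_relMap_iff φ (by simpa only [hφ] using hP)
  exact ⟨R, fun x y => (hR x y).symm.trans (hφ x y)⟩

theorem exists_relMap_true (hM : NamesMonotoneRelations L M) :
    ∃ R : L.Relations 2, ∀ x y : M, RelMap R ![x, y] := by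
  simpa using hM.exists_relMap_iff_of_realize ⊤ (P := fun _ _ => True) (by simp)
    (fun _ _ _ _ _ _ _ => trivial)

theorem exists_relMap_not_swap (hM : NamesMonotoneRelations L M) (R : L.Relations 2) :
    ∃ R' : L.Relations 2, ∀ x y : M, RelMap R' ![x, y] ↔ ¬RelMap R ![y, x] :=
  hM.exists_relMap_iff_of_realize (R.formula₂ (var 1) (var 0)).not (by simp)
    fun _ _ _ _ hx hR hy hR' => hR (hM.monotoneRel_relMap R _ _ _ _ hy hR' hx)

theorem exists_relMap_iff_forall_imp_right (hM : NamesMonotoneRelations L M)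
    (R S : L.Relations 2) :
    ∃ T : L.Relations 2, ∀ x y : M,
      RelMap T ![x, y] ↔ ∀ z, RelMap S ![y, z] → RelMap R ![x, z] :=
  hM.exists_relMap_iff_of_realize
    (∀' (S.boundedFormula₂ (var (.inl 1)) &0 ⟹ R.boundedFormula₂ (var (.inl 0)) &0))
    (by simp [Formula.Realize, Fin.snoc])
    fun _ _ _ _ hx hT hy z hS => hM.monotoneRel_relMap R _ _ _ _ hx
      (hT z (hM.monotoneRel_relMap S _ _ _ _ hy hS le_rfl)) le_rfl

theorem exists_relMap_iff_forall_imp_left (hM : NamesMonotoneRelations L M)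
    (R S : L.Relations 2) :
    ∃ T : L.Relations 2, ∀ x y : M,
      RelMap T ![x, y] ↔ ∀ z, RelMap R ![z, x] → RelMap S ![z, y] :=
  hM.exists_relMap_iff_of_realize
    (∀' (R.boundedFormula₂ &0 (var (.inl 0)) ⟹ S.boundedFormula₂ &0 (var (.inl 1))))
    (by simp [Formula.Realize, Fin.snoc])
    fun _ _ _ _ hx hT hy z hR => hM.monotoneRel_relMap S _ _ _ _ le_rfl
      (hT z (hM.monotoneRel_relMap R _ _ _ _ le_rfl hR hx)) hy

theorem exists_relMap_iff_exists (hM : NamesMonotoneRelations L M) (C : L.Formula (Fin 1))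
    (R S : L.Relations 2) :
    ∃ T : L.Relations 2, ∀ x y : M,
      RelMap T ![x, y] ↔ ∃ z, C.Realize (fun _ => z) ∧ RelMap R ![x, z] ∧ RelMap S ![z, y] :=
  hM.exists_relMap_iff_of_realize
    (∃' (BoundedFormula.relabel (fun _ => (.inr 0 : Fin 2 ⊕ Fin 1)) C ⊓
      R.boundedFormula₂ (var (.inl 0)) &0 ⊓ S.boundedFormula₂ &0 (var (.inl 1))))
    (by simp [Formula.Realize, Fin.snoc, Function.comp_def, and_assoc,
      Subsingleton.elim _ (default : Fin 0 → M)])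
    fun _ _ _ _ hx ⟨z, hC, hR, hS⟩ hy => ⟨z, hC, hM.monotoneRel_relMap R _ _ _ _ hx hR le_rfl,
      hM.monotoneRel_relMap S _ _ _ _ le_rfl hS hy⟩

end NamesMonotoneRelations

theorem Cell.isQFDefinable_exists [LinearOrder M] [Nonempty α] (hM : NamesMonotoneRelations L M)
    (c : Cell L α k) : IsQFDefinable L fun (v : α → M) xs => ∃ y, c.Realize v xs y := by
  obtain ⟨top, htop⟩ := hM.exists_relMap_true
  choose sub hsub using hM.exists_relMap_iff_forall_imp_right
  choose sub' hsub' using hM.exists_relMap_iff_forall_imp_left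
  choose wit hwit using hM.exists_relMap_iff_exists
  -- padding with the trivial bound makes both lists nonempty
  set lo := (top, Sum.inl (Classical.arbitrary α)) :: c.lower
  set up := (top, Sum.inl (Classical.arbitrary α)) :: c.upper
  refine (c.isQF_side.isQFDefinable.and <| IsQFDefinable.list_exists lo fun p _ =>
    IsQFDefinable.list_exists up fun q _ =>
      (IsQFDefinable.list_forall lo fun p' _ => isQFDefinable_relMap₂ (sub p'.1 p.1) p'.2 p.2).and
      ((IsQFDefinable.list_forall up fun q' _ => isQFDefinable_relMap₂ (sub' q.1 q'.1) q.2 q'.2).and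
        (isQFDefinable_relMap₂ (wit c.color p.1 q.1) p.2 q.2))).of_iff fun v xs => ?_
  have key := exists_mem_forall_iff_of_isUpperSet_of_isLowerSet (lo := lo) (up := up)
    (List.cons_ne_nil _ _) (List.cons_ne_nil _ _)
    (fun p => {z | RelMap p.1 ![Sum.elim v xs p.2, z]})
    (fun q => {z | RelMap q.1 ![z, Sum.elim v xs q.2]})
    (fun p _ => (hM.monotoneRel_relMap p.1).isUpperSet_setOf _)
    (fun q _ => (hM.monotoneRel_relMap q.1).isLowerSet_setOf _) {y | c.color.Realize fun _ => y}
  simp only [Set.subset_def, Set.mem_ofPred_eq, Set.Nonempty, Set.mem_inter_iff, and_assoc] at key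
  simp only [Cell.Realize, hsub, hsub', hwit, exists_and_left]
  rw [← key]
  simp [lo, up, htop]

theorem IsCellDefinable.isQFDefinable_exists [LinearOrder M] [Nonempty α]
    (hM : NamesMonotoneRelations L M) {P : (α → M) → (Fin k → M) → M → Prop}
    (h : IsCellDefinable L P) : IsQFDefinable L fun v xs => ∃ y, P v xs y := by
  obtain ⟨D, hD⟩ := h
  exact (IsQFDefinable.list_exists D fun c _ => c.isQFDefinable_exists hM).of_iff
    fun v xs => by
      simp only [hD]
      exact ⟨fun ⟨c, hc, y, hy⟩ => ⟨y, c, hc, hy⟩, fun ⟨y, c, hc, hy⟩ => ⟨c, hc, y, hy⟩⟩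

theorem Term.exists_eq_var (hfun : ∀ n, IsEmpty (L.Functions n)) {β : Type*} (t : L.Term β) :
    ∃ x, t = var x := by
  cases t with
  | var x => exact ⟨x, rfl⟩
  | func f _ => exact ((hfun _).false f).elim

theorem isCellDefinable_relMap₁ (R : L.Relations 1) (x : α ⊕ Fin (k + 1)) :
    IsCellDefinable L fun (v : α → M) xs y => RelMap R ![Sum.elim v (Fin.snoc xs y) x] := by
  rcases Sum.eq_inr_last_or_exists_eq_map_castSucc x with rfl | ⟨x, rfl⟩
  · exact (IsCellDefinable.color (R.formula₁ (var 0))).of_iff (by simp)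
  · exact (IsCellDefinable.side ⟨R.boundedFormula₁ (var x), (IsAtomic.rel _ _).isQF,
      fun _ _ => realize_rel₁⟩).of_iff (by simp)

theorem isCellDefinable_relMap₂ (R : L.Relations 2) (x₁ x₂ : α ⊕ Fin (k + 1)) :
    IsCellDefinable L fun (v : α → M) xs y =>
      RelMap R ![Sum.elim v (Fin.snoc xs y) x₁, Sum.elim v (Fin.snoc xs y) x₂] := by
  rcases Sum.eq_inr_last_or_exists_eq_map_castSucc x₁ with rfl | ⟨x₁, rfl⟩ <;>
    rcases Sum.eq_inr_last_or_exists_eq_map_castSucc x₂ with rfl | ⟨x₂, rfl⟩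
  · exact (IsCellDefinable.color (R.formula₂ (var 0) (var 0))).of_iff (by simp)
  · exact (IsCellDefinable.upper R x₂).of_iff (by simp)
  · exact (IsCellDefinable.lower R x₁).of_iff (by simp)
  · exact (IsCellDefinable.side (isQFDefinable_relMap₂ R x₁ x₂)).of_iff (by simp)

theorem BoundedFormula.IsAtomic.isCellDefinable [PartialOrder M]
    (hfun : ∀ n, IsEmpty (L.Functions n)) (hrel : ∀ n, n ≠ 1 → n ≠ 2 → IsEmpty (L.Relations n))
    (r₀ : L.Relations 2) (hr₀ : ∀ x y : M, RelMap r₀ ![x, y] ↔ x ≤ y)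
    {θ : L.BoundedFormula α (k + 1)} (h : θ.IsAtomic) :
    IsCellDefinable L fun (v : α → M) xs y => θ.Realize v (Fin.snoc xs y) := by
  cases h with
  | equal t₁ t₂ =>
    obtain ⟨x₁, rfl⟩ := t₁.exists_eq_var hfun
    obtain ⟨x₂, rfl⟩ := t₂.exists_eq_var hfun
    exact ((isCellDefinable_relMap₂ r₀ x₁ x₂).and (isCellDefinable_relMap₂ r₀ x₂ x₁)).of_iff
      fun v xs y => by simp [hr₀, le_antisymm_iff]
  | @rel l R ts =>
    obtain _ | _ | _ | l := l
    · exact ((hrel 0 (by omega) (by omega)).false R).elim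
    · obtain ⟨x, hx⟩ := (ts 0).exists_eq_var hfun
      obtain rfl : ts = ![var x] := funext fun i => by fin_cases i; exact hx
      exact (isCellDefinable_relMap₁ R x).of_iff fun _ _ _ => (realize_rel₁ (t := var x)).symm
    · obtain ⟨x₁, hx₁⟩ := (ts 0).exists_eq_var hfun
      obtain ⟨x₂, hx₂⟩ := (ts 1).exists_eq_var hfun
      obtain rfl : ts = ![var x₁, var x₂] := funext fun i => by
        fin_cases i
        exacts [hx₁, hx₂]
      exact (isCellDefinable_relMap₂ R x₁ x₂).of_iff fun _ _ _ =>
        (realize_rel₂ (t₁ := var x₁) (t₂ := var x₂)).symm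
    · exact ((hrel _ (by omega) (by omega)).false R).elim

theorem BoundedFormula.IsQF.isCellDefinable [PartialOrder M]
    (hfun : ∀ n, IsEmpty (L.Functions n)) (hrel : ∀ n, n ≠ 1 → n ≠ 2 → IsEmpty (L.Relations n))
    (r₀ : L.Relations 2) (hr₀ : ∀ x y : M, RelMap r₀ ![x, y] ↔ x ≤ y)
    (hneg : ∀ R : L.Relations 2, ∃ R' : L.Relations 2,
      ∀ a b : M, RelMap R' ![a, b] ↔ ¬RelMap R ![b, a])
    {θ : L.BoundedFormula α (k + 1)} (h : θ.IsQF) :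
    IsCellDefinable L fun (v : α → M) xs y => θ.Realize v (Fin.snoc xs y) := by
  induction h with
  | falsum => exact ⟨[], by simp [Realize]⟩
  | of_isAtomic h => exact h.isCellDefinable hfun hrel r₀ hr₀
  | imp _ _ ih₁ ih₂ => exact ((ih₁.not hneg).or ih₂).of_iff fun v xs y => by simp [imp_iff_not_or]

theorem isQFDefinable_realize [LinearOrder M] [Nonempty α]
    (hfun : ∀ n, IsEmpty (L.Functions n)) (hrel : ∀ n, n ≠ 1 → n ≠ 2 → IsEmpty (L.Relations n))
    (r₀ : L.Relations 2) (hr₀ : ∀ x y : M, RelMap r₀ ![x, y] ↔ x ≤ y)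
    (hM : NamesMonotoneRelations L M) {n : ℕ} (φ : L.BoundedFormula α n) :
    IsQFDefinable L (φ.Realize : (α → M) → _) := by
  induction φ with
  | falsum => exact isQF_bot.isQFDefinable
  | equal t₁ t₂ => exact (IsAtomic.equal t₁ t₂).isQF.isQFDefinable
  | rel R ts => exact (IsAtomic.rel R ts).isQF.isQFDefinable
  | imp _ _ ih₁ ih₂ => exact (ih₁.imp ih₂).of_iff fun v xs => realize_imp.symm
  | all φ ih =>
    obtain ⟨χ, hχ, hφ⟩ := ih
    have hnot := hχ.not.isCellDefinable hfun hrel r₀ hr₀ hM.exists_relMap_not_swap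
    exact (hnot.isQFDefinable_exists hM).not.of_iff fun v xs => by simp [hφ]

theorem Formula.realize_iff_of_model_completeTheory {β : Type*} [Finite β] {φ ψ : L.Formula β}
    (h : ∀ v : β → M, φ.Realize v ↔ ψ.Realize v) (N : Type*) [L.Structure N]
    [N ⊨ L.completeTheory M] (v : β → N) : φ.Realize v ↔ ψ.Realize v := by
  let σ : L.Sentence := ((φ.iff ψ).relabel Sum.inr).iAlls β
  have hσ : M ⊨ σ := by simp [σ, Sentence.Realize, h]
  have hN := (Language.realize_iff_of_model_completeTheory M N σ).2 hσ
  simp only [σ, Sentence.Realize, Formula.realize_iAlls] at hN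
  simpa [Formula.realize_relabel, Function.comp_def] using hN v

end FirstOrder.Language

theorem statement_4_general (L : FirstOrder.Language.{v, w}) (M : Type u) [SM : L.Structure M]
    [LinearOrder M]
    -- the symbols of `L` are unary and binary relation symbols only
    (hfun : ∀ n : ℕ, IsEmpty (L.Functions n))
    (hrel : ∀ n : ℕ, n ≠ 1 → n ≠ 2 → IsEmpty (L.Relations n))
    -- some binary relation symbol is interpreted as the linear order `≤`
    (r₀ : L.Relations 2) (hr₀ : ∀ x y : M, Structure.RelMap r₀ ![x, y] ↔ x ≤ y)
    -- every binary relation symbol is interpreted by a monotone relation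
    (hmono : ∀ (r : L.Relations 2) (x x₁ y y₁ : M), x₁ ≤ x →
      Structure.RelMap r ![x, y] → y ≤ y₁ → Structure.RelMap r ![x₁, y₁])
    -- every `∅`-definable monotone binary relation is the interpretation of a binary symbol
    (hmonodef : ∀ φ : L.Formula (Fin 2),
      (∀ x x₁ y y₁ : M, x₁ ≤ x → φ.Realize ![x, y] → y ≤ y₁ → φ.Realize ![x₁, y₁]) →
      ∃ r : L.Relations 2, ∀ x y : M, φ.Realize ![x, y] ↔ Structure.RelMap r ![x, y]) :
    -- then `Th(M)` eliminates quantifiers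
    ∀ (n : ℕ) (φ : L.Formula (Fin (n + 1))), ∃ ψ : L.Formula (Fin (n + 1)),
      ψ.IsQF ∧ ∀ (N : Type (max u v w)) (SN : L.Structure N),
        @Theory.Model L N SN (L.completeTheory M) →
        ∀ v : Fin (n + 1) → N,
          @Formula.Realize L N SN _ φ v ↔ @Formula.Realize L N SN _ ψ v := by
  intro n φ
  obtain ⟨ψ, hψ, hφψ⟩ := isQFDefinable_realize hfun hrel r₀ hr₀ ⟨hmono, hmonodef⟩ φ
  exact ⟨ψ, hψ, fun N _ _ => Formula.realize_iff_of_model_completeTheory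
    (fun v => (hφψ v default).symm) N⟩

theorem statement_4 (L : FirstOrder.Language.{v, w}) (M : Type u) [SM : L.Structure M]
    [LinearOrder M]
    -- the symbols of `L` are unary and binary relation symbols only
    (hfun : ∀ n : ℕ, IsEmpty (L.Functions n))
    (hrel : ∀ n : ℕ, n ≠ 1 → n ≠ 2 → IsEmpty (L.Relations n))
    -- some binary relation symbol is interpreted as the linear order `≤`
    (r₀ : L.Relations 2) (hr₀ : ∀ x y : M, Structure.RelMap r₀ ![x, y] ↔ x ≤ y)
    -- every binary relation symbol is interpreted by a monotone relation
    (hmono : ∀ (r : L.Relations 2) (x x₁ y y₁ : M), x₁ ≤ x →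
      Structure.RelMap r ![x, y] → y ≤ y₁ → Structure.RelMap r ![x₁, y₁])
    -- every `∅`-definable subset is the interpretation of a unary relation symbol
    (hcolor : ∀ φ : L.Formula (Fin 1), ∃ c : L.Relations 1,
      ∀ x : M, φ.Realize (fun _ => x) ↔ Structure.RelMap c ![x])
    -- every `∅`-definable monotone binary relation is the interpretation of a binary symbol
    (hmonodef : ∀ φ : L.Formula (Fin 2),
      (∀ x x₁ y y₁ : M, x₁ ≤ x → φ.Realize ![x, y] → y ≤ y₁ → φ.Realize ![x₁, y₁]) →
      ∃ r : L.Relations 2, ∀ x y : M, φ.Realize ![x, y] ↔ Structure.RelMap r ![x, y]) :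
    -- then `Th(M)` eliminates quantifiers
    ∀ (n : ℕ) (φ : L.Formula (Fin (n + 1))), ∃ ψ : L.Formula (Fin (n + 1)),
      ψ.IsQF ∧ ∀ (N : Type (max u v w)) (SN : L.Structure N),
        @Theory.Model L N SN (L.completeTheory M) →
        ∀ v : Fin (n + 1) → N,
          @Formula.Realize L N SN _ φ v ↔ @Formula.Realize L N SN _ ψ v :=
  statement_4_general L M (SM := SM) hfun hrel r₀ hr₀ hmono hmonodef
end

section
/- Let (T, ≤) be a tree, regarded as a structure in the language {≤}. Let a ∈ T and let D = {x ∈ T : a ≤ x} be the closed ball of center a. Let x̄ and x̄′ be n-tuples of elements of T ∖ D, and let ȳ and ȳ′ be m-tuples of elements of D, such that the (n+1)-tuples (x̄, a) and (x̄′, a) have the same type and the (m+1)-tuples (ȳ, a) and (ȳ′, a) have the same type. Then the (n+m+1)-tuples (x̄, ȳ, a) and (x̄′, ȳ′, a) have the same type. -/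
/-!
Feferman–Vaught decomposition over the ball `D = {t | a ≤ t}`. Split the free variables of a
formula into those interpreted outside `D` and those interpreted inside it. On assignments
respecting the split, the formula is equivalent to a finite disjunction of conjunctions
`F(outside variables, a) ∧ G(inside variables, a)`: in a tree, an outside point `u` and an inside
point `v` are related only through `a`, since `v ≤ u` never holds and `u ≤ v ↔ u ≤ a`. Such
decompositions survive boolean combinations, and a quantifier is handled by splitting on the side
of the quantified point, which the formulas on the other side do not see. The types of `(x̄, a)`
and `(ȳ, a)` then decide every `F` and `G`.
-/

open FirstOrder FirstOrder.Language

universe u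

instance (priority := low) orderStruc (T : Type u) [LE T] : Language.order.Structure T :=
  Language.orderStructure T

namespace TreeBall

instance (T : Type u) [LE T] : Language.order.OrderedStructure T := ⟨fun _ => Iff.rfl⟩

def IsTreeOrder (T : Type u) [LE T] : Prop :=
  ∀ x y z : T, y ≤ x → z ≤ x → y ≤ z ∨ z ≤ y

variable {T : Type u} {γ γ' : Type*}

theorem le_iff_le_of_not_le_of_le [Preorder T] (htree : IsTreeOrder T) {a p q : T}
    (hp : ¬a ≤ p) (hq : a ≤ q) : p ≤ q ↔ p ≤ a :=
  ⟨fun hpq => (htree q p a hpq hq).resolve_right hp, fun hpa => hpa.trans hq⟩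

def Respects [LE T] (a : T) (s : γ → Bool) (w : γ → T) : Prop :=
  ∀ g, s g = true ↔ a ≤ w g

/-- The extra variable stands for the parameter `a`. The variables that are not on side `b` are
also sent to `a`, so a formula evaluated here only sees side `b` of `w`. -/
def keepSide (a : T) (s : γ → Bool) (b : Bool) (w : γ → T) : γ ⊕ Unit → T :=
  Sum.elim (fun g => if s g = b then w g else a) fun _ => a

def FVDecomposable [LE T] (a : T) (s : γ → Bool) (P : (γ → T) → Prop) : Prop :=
  ∃ l : List (Bool → Language.order.Formula (γ ⊕ Unit)), ∀ w, Respects a s w →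
    (P w ↔ ∃ F ∈ l, ∀ b, (F b).Realize (keepSide a s b w))

def swapLast : (γ ⊕ Unit) ⊕ Unit → (γ ⊕ Unit) ⊕ Unit :=
  Sum.elim (Sum.map Sum.inl id) fun _ => Sum.inl (Sum.inr ())

def mergeLast : (γ ⊕ Unit) ⊕ Unit → γ ⊕ Unit :=
  Sum.elim (Sum.elim Sum.inl Sum.inr) Sum.inr

theorem keepSide_elim_self (a : T) (s : γ → Bool) (b : Bool) (w : γ → T) (t : T) :
    keepSide a (Sum.elim s fun _ => b) b (Sum.elim w fun _ => t) =
      Sum.elim (keepSide a s b w) (fun _ => t) ∘ swapLast := by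
  funext g
  rcases g with (g | _) | _ <;> simp [keepSide, swapLast]; rfl

theorem keepSide_elim_of_ne (a : T) (s : γ → Bool) {b c : Bool} (hcb : c ≠ b) (w : γ → T)
    (t : T) :
    keepSide a (Sum.elim s fun _ => b) c (Sum.elim w fun _ => t) =
      keepSide a s c w ∘ mergeLast := by
  funext g
  rcases g with (g | _) | _ <;> simp [keepSide, mergeLast, Ne.symm hcb]; rfl

def snocVar {β : Type*} {k : ℕ} : β ⊕ Fin (k + 1) → (β ⊕ Fin k) ⊕ Unit :=
  Sum.elim (Sum.inl ∘ Sum.inl) (Fin.snoc (Sum.inl ∘ Sum.inr) (Sum.inr ()))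

theorem elim_comp_snocVar {β : Type*} {k : ℕ} (w : β ⊕ Fin k → T) (t : T) :
    (Sum.elim w fun _ => t) ∘ snocVar = Sum.elim (w ∘ Sum.inl) (Fin.snoc (w ∘ Sum.inr) t) := by
  rw [snocVar, Sum.comp_elim, Fin.comp_snoc]
  rfl

theorem exists_eq_var {α : Type*} (t : Language.order.Term α) : ∃ g, t = Term.var g := by
  cases t with
  | var g => exact ⟨g, rfl⟩
  | func f _ => exact isEmptyElim f

section Boolean

variable [LE T] {a : T} {s : γ → Bool} {P Q : (γ → T) → Prop}

theorem FVDecomposable.congr (hQ : FVDecomposable a s Q)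
    (h : ∀ w, Respects a s w → (P w ↔ Q w)) : FVDecomposable a s P := by
  obtain ⟨l, hl⟩ := hQ
  exact ⟨l, fun w hw => (h w hw).trans (hl w hw)⟩

theorem fvDecomposable_false : FVDecomposable a s fun _ => False :=
  ⟨[], by simp⟩

theorem fvDecomposable_true : FVDecomposable a s fun _ => True :=
  ⟨[fun _ => ⊤], by simp⟩

theorem fvDecomposable_side (b : Bool) (F : Language.order.Formula (γ ⊕ Unit)) :
    FVDecomposable a s fun w => F.Realize (keepSide a s b w) :=
  ⟨[fun c => if c = b then F else ⊤], fun w _ => by cases b <;> simp⟩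

theorem FVDecomposable.or (hP : FVDecomposable a s P) (hQ : FVDecomposable a s Q) :
    FVDecomposable a s fun w => P w ∨ Q w := by
  obtain ⟨l₁, hl₁⟩ := hP
  obtain ⟨l₂, hl₂⟩ := hQ
  exact ⟨l₁ ++ l₂, fun w hw => by simp [hl₁ w hw, hl₂ w hw, or_and_right, exists_or]⟩

theorem FVDecomposable.and (hP : FVDecomposable a s P) (hQ : FVDecomposable a s Q) :
    FVDecomposable a s fun w => P w ∧ Q w := by
  obtain ⟨l₁, hl₁⟩ := hP
  obtain ⟨l₂, hl₂⟩ := hQ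
  refine ⟨l₁.flatMap fun F => l₂.map fun G => F ⊓ G, fun w hw => ?_⟩
  simp only [hl₁ w hw, hl₂ w hw, List.mem_flatMap, List.mem_map]
  constructor
  · rintro ⟨⟨F, hF, hFw⟩, G, hG, hGw⟩
    exact ⟨F ⊓ G, ⟨F, hF, G, hG, rfl⟩, fun b => Formula.realize_inf.2 ⟨hFw b, hGw b⟩⟩
  · rintro ⟨_, ⟨F, hF, G, hG, rfl⟩, hFGw⟩
    exact ⟨⟨F, hF, fun b => (Formula.realize_inf.1 (hFGw b)).1⟩,
      G, hG, fun b => (Formula.realize_inf.1 (hFGw b)).2⟩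

theorem FVDecomposable.not (hP : FVDecomposable a s P) : FVDecomposable a s fun w => ¬P w := by
  obtain ⟨l, hl⟩ := hP
  have hneg : ∀ l' : List (Bool → Language.order.Formula (γ ⊕ Unit)),
      FVDecomposable a s fun w => ∀ F ∈ l', ∃ b, ¬(F b).Realize (keepSide a s b w) := by
    intro l'
    induction l' with
    | nil => exact fvDecomposable_true.congr fun _ _ => by simp
    | cons F l' ih =>
      have hF : FVDecomposable a s fun w => ∃ b, ¬(F b).Realize (keepSide a s b w) :=
        ((fvDecomposable_side false (F false).not).or
          (fvDecomposable_side true (F true).not)).congr fun _ _ => by simp [Bool.exists_bool]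
      exact (hF.and ih).congr fun _ _ => by simp
  exact (hneg l).congr fun w hw => by simp only [hl w hw, not_exists, not_and, not_forall]

theorem FVDecomposable.comp {s : γ' → Bool} (f : γ → γ') (hP : FVDecomposable a (s ∘ f) P) :
    FVDecomposable a s fun w => P (w ∘ f) := by
  obtain ⟨l, hl⟩ := hP
  refine ⟨l.map fun F b => (F b).relabel (Sum.map f id), fun w hw => ?_⟩
  have hkeep : ∀ b, keepSide a (s ∘ f) b (w ∘ f) = keepSide a s b w ∘ Sum.map f id := by
    intro b
    funext g
    rcases g with g | _ <;> rfl
  refine (hl (w ∘ f) fun g => hw (f g)).trans ?_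
  simp [Formula.realize_relabel, hkeep]

end Boolean

section Quantifiers

variable [LE T] {a : T} {s : γ → Bool} {P : (γ ⊕ Unit → T) → Prop}

def sideGuard (b : Bool) : Language.order.Formula ((γ ⊕ Unit) ⊕ Unit) :=
  if b then leSymb.formula₂ (Term.var (Sum.inl (Sum.inr ()))) (Term.var (Sum.inr ()))
  else ∼(leSymb.formula₂ (Term.var (Sum.inl (Sum.inr ()))) (Term.var (Sum.inr ())))

theorem realize_sideGuard (b : Bool) (v : γ ⊕ Unit → T) (t : T) (hv : v (Sum.inr ()) = a) :
    (sideGuard b).Realize (Sum.elim v fun _ => t) ↔ (b = true ↔ a ≤ t) := by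
  cases b <;> simp [sideGuard, hv]

/-- Once `t` is on side `b`, the formulas of side `!b` do not see it, so the quantifier moves onto
the formula of side `b`. -/
theorem FVDecomposable.exists_of_side (b : Bool)
    (hP : FVDecomposable a (Sum.elim s fun _ => b) P) :
    FVDecomposable a s fun w => ∃ t, (b = true ↔ a ≤ t) ∧ P (Sum.elim w fun _ => t) := by
  obtain ⟨l, hl⟩ := hP
  refine ⟨l.map fun F c => if c = b then (sideGuard b ⊓ (F b).relabel swapLast).iExs Unit
    else (F c).relabel mergeLast, fun w hw => ?_⟩
  have hwt : ∀ t, (b = true ↔ a ≤ t) →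
      Respects a (Sum.elim s fun _ : Unit => b) (Sum.elim w fun _ => t) := by
    rintro t ht (g | _)
    exacts [hw g, ht]
  calc (∃ t, (b = true ↔ a ≤ t) ∧ P (Sum.elim w fun _ => t))
      ↔ ∃ t, (b = true ↔ a ≤ t) ∧ ∃ F ∈ l,
          (F b).Realize (Sum.elim (keepSide a s b w) (fun _ => t) ∘ swapLast) ∧
          (F !b).Realize (keepSide a s (!b) w ∘ mergeLast) :=
        exists_congr fun t => and_congr_right fun ht => by
          rw [hl _ (hwt t ht)]
          simp only [Bool.forall_bool' b, keepSide_elim_self,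
            keepSide_elim_of_ne a s (Bool.not_ne_self b)]
    _ ↔ ∃ F ∈ l, (∃ t, (b = true ↔ a ≤ t) ∧
          (F b).Realize (Sum.elim (keepSide a s b w) (fun _ => t) ∘ swapLast)) ∧
          (F !b).Realize (keepSide a s (!b) w ∘ mergeLast) :=
        ⟨fun ⟨t, ht, F, hF, hb, hnb⟩ => ⟨F, hF, ⟨t, ht, hb⟩, hnb⟩,
          fun ⟨F, hF, ⟨t, ht, hb⟩, hnb⟩ => ⟨t, ht, F, hF, hb, hnb⟩⟩
    _ ↔ _ := by
        simp only [List.mem_map, exists_exists_and_eq_and, Bool.forall_bool' b, if_pos,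
          if_neg (Bool.not_ne_self b), Formula.realize_iExs, Formula.realize_inf,
          Formula.realize_relabel]
        refine exists_congr fun F => and_congr_right fun _ => and_congr_left' ⟨?_, ?_⟩
        · rintro ⟨t, ht, hF⟩
          exact ⟨fun _ => t, (realize_sideGuard b _ t rfl).2 ht, hF⟩
        · rintro ⟨i, hi, hF⟩
          exact ⟨i (), (realize_sideGuard b _ (i ()) rfl).1 hi, hF⟩

theorem FVDecomposable.exists (hP : ∀ b, FVDecomposable a (Sum.elim s fun _ => b) P) :
    FVDecomposable a s fun w => ∃ t, P (Sum.elim w fun _ => t) :=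
  (((hP false).exists_of_side false).or ((hP true).exists_of_side true)).congr fun _ _ =>
    ⟨fun ⟨t, ht⟩ => by
      by_cases hat : a ≤ t
      exacts [.inr ⟨t, by simp [hat], ht⟩, .inl ⟨t, by simp [hat], ht⟩],
    by rintro (⟨t, -, ht⟩ | ⟨t, -, ht⟩) <;> exact ⟨t, ht⟩⟩

theorem FVDecomposable.forall (hP : ∀ b, FVDecomposable a (Sum.elim s fun _ => b) P) :
    FVDecomposable a s fun w => ∀ t, P (Sum.elim w fun _ => t) :=
  (FVDecomposable.exists fun b => (hP b).not).not.congr fun _ _ => not_exists_not.symm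

end Quantifiers

section Tree

variable [PartialOrder T] {a : T} {s : γ → Bool}

theorem fvDecomposable_le (htree : IsTreeOrder T) (g h : γ) :
    FVDecomposable a s fun w => w g ≤ w h := by
  by_cases hgh : s g = s h
  · refine (fvDecomposable_side (s g)
      (leSymb.formula₂ (Term.var (Sum.inl g)) (Term.var (Sum.inl h)))).congr fun w _ => ?_
    simp [keepSide, hgh]
  cases hg : s g <;> cases hh : s h <;> simp only [hg, hh, not_true_eq_false] at hgh
  · refine (fvDecomposable_side false
      (leSymb.formula₂ (Term.var (Sum.inl g)) (Term.var (Sum.inr ())))).congr fun w hw => ?_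
    have hout : ¬a ≤ w g := by simp [← hw g, hg]
    simp [keepSide, hg, le_iff_le_of_not_le_of_le htree hout ((hw h).1 hh)]
  · exact fvDecomposable_false.congr fun w hw =>
      iff_false_intro fun hle => by simpa [← hw h, hh] using ((hw g).1 hg).trans hle

theorem fvDecomposable_eq (htree : IsTreeOrder T) (g h : γ) :
    FVDecomposable a s fun w => w g = w h :=
  ((fvDecomposable_le htree g h).and (fvDecomposable_le htree h g)).congr fun _ _ =>
    le_antisymm_iff

theorem fvDecomposable_realize (htree : IsTreeOrder T) {β : Type*} {k : ℕ}
    (φ : Language.order.BoundedFormula β k) (s : β ⊕ Fin k → Bool) :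
    FVDecomposable a s fun w => φ.Realize (w ∘ Sum.inl) (w ∘ Sum.inr) := by
  induction φ with
  | falsum => exact fvDecomposable_false.congr fun _ _ => Iff.rfl
  | equal t₁ t₂ =>
    obtain ⟨g, rfl⟩ := exists_eq_var t₁
    obtain ⟨h, rfl⟩ := exists_eq_var t₂
    exact (fvDecomposable_eq htree g h).congr fun w _ => by
      simp only [BoundedFormula.Realize, Term.realize_var, Sum.elim_comp_inl_inr]
  | rel R ts =>
    cases R
    obtain ⟨g, hg⟩ := exists_eq_var (ts 0)
    obtain ⟨h, hh⟩ := exists_eq_var (ts 1)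
    exact (fvDecomposable_le htree g h).congr fun w _ => by
      show Term.realize _ (ts 0) ≤ Term.realize _ (ts 1) ↔ _
      simp [hg, hh]
  | imp φ ψ ihφ ihψ =>
    exact ((ihφ s).not.or (ihψ s)).congr fun _ _ => by simp [imp_iff_not_or]
  | all φ ih =>
    exact (FVDecomposable.forall fun b =>
      (ih (Sum.elim s (fun _ => b) ∘ snocVar)).comp snocVar).congr fun w _ => by
        simp only [elim_comp_snocVar, Sum.elim_comp_inl, Sum.elim_comp_inr,
          BoundedFormula.realize_all]

theorem fvDecomposable_formula (htree : IsTreeOrder T) (φ : Language.order.Formula γ)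
    (s : γ → Bool) : FVDecomposable a s φ.Realize :=
  ((fvDecomposable_realize htree φ (s ∘ Sum.elim id finZeroElim)).comp
    (Sum.elim id finZeroElim)).congr fun w _ => by
      rw [Formula.Realize, Subsingleton.elim default (w ∘ Sum.elim id finZeroElim ∘ Sum.inr)]
      rfl

theorem exists_decomposition (htree : IsTreeOrder T) (a : T) {α β : Type*}
    (φ : Language.order.Formula ((α ⊕ β) ⊕ Unit)) :
    ∃ l : List (Language.order.Formula (α ⊕ Unit) × Language.order.Formula (β ⊕ Unit)),
      ∀ (x : α → T) (y : β → T), (∀ i, ¬a ≤ x i) → (∀ j, a ≤ y j) →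
        (φ.Realize (Sum.elim (Sum.elim x y) fun _ => a) ↔
          ∃ p ∈ l, p.1.Realize (Sum.elim x fun _ => a) ∧ p.2.Realize (Sum.elim y fun _ => a)) := by
  obtain ⟨l, hl⟩ := fvDecomposable_formula htree φ
    (Sum.elim (Sum.elim (fun _ => false) fun _ => true) fun _ => true) (a := a)
  refine ⟨l.map fun F =>
    ((F false).relabel (Sum.elim (Sum.elim (Sum.elim Sum.inl fun _ => Sum.inr ()) Sum.inr) Sum.inr),
     (F true).relabel (Sum.elim (Sum.elim (Sum.elim (fun _ => Sum.inr ()) Sum.inl) Sum.inr) Sum.inr)),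
    fun x y hx hy => ?_⟩
  refine (hl _ ?_).trans ?_
  · rintro ((i | j) | _)
    · simpa using hx i
    · simpa using hy j
    · simp
  · simp only [List.mem_map, exists_exists_and_eq_and, Bool.forall_bool, Formula.realize_relabel]
    refine exists_congr fun F => and_congr_right fun _ =>
      and_congr (iff_of_eq (congrArg _ ?_)) (iff_of_eq (congrArg _ ?_)) <;>
    · funext g
      rcases g with ((_ | _) | _) | _ <;> rfl

end Tree

end TreeBall

theorem statement_8 (T : Type u) [SemilatticeInf T]
    -- `T` is a tree: the set of points below any point is linearly ordered
    -- (infima of pairs exist by `SemilatticeInf`)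
    (htree : ∀ x y z : T, y ≤ x → z ≤ x → y ≤ z ∨ z ≤ y)
    (a : T) (n m : ℕ)
    -- `x̄`, `x̄′` are tuples from the complement of the closed ball `D = {z : a ≤ z}`
    (x x' : Fin n → T) (hx : ∀ i, ¬a ≤ x i) (hx' : ∀ i, ¬a ≤ x' i)
    -- `ȳ`, `ȳ′` are tuples from `D`
    (y y' : Fin m → T) (hy : ∀ j, a ≤ y j) (hy' : ∀ j, a ≤ y' j)
    -- `(x̄, a)` and `(x̄′, a)` have the same type
    (htx : ∀ φ : Language.order.Formula (Fin n ⊕ Unit),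
      φ.Realize (Sum.elim x fun _ => a) ↔ φ.Realize (Sum.elim x' fun _ => a))
    -- `(ȳ, a)` and `(ȳ′, a)` have the same type
    (hty : ∀ φ : Language.order.Formula (Fin m ⊕ Unit),
      φ.Realize (Sum.elim y fun _ => a) ↔ φ.Realize (Sum.elim y' fun _ => a)) :
    -- then `(x̄, ȳ, a)` and `(x̄′, ȳ′, a)` have the same type
    ∀ φ : Language.order.Formula ((Fin n ⊕ Fin m) ⊕ Unit),
      φ.Realize (Sum.elim (Sum.elim x y) fun _ => a) ↔
        φ.Realize (Sum.elim (Sum.elim x' y') fun _ => a) := by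
  intro φ
  obtain ⟨l, hl⟩ := TreeBall.exists_decomposition htree a φ
  rw [hl x y hx hy, hl x' y' hx' hy']
  exact exists_congr fun p => and_congr_right fun _ => and_congr (htx p.1) (hty p.2)
end

section
/- Let G be an ordered group (a group with a linear order ≤ such that a ≤ b implies c·a·d ≤ c·b·d for all c, d) and let x ∈ G. Let C(x) = {g ∈ G : g·x = x·g} be the centralizer of x and let D(x) = {y ∈ G : ∃ h₁, h₂ ∈ C(x), h₁ ≤ y ≤ h₂} be the convex hull of C(x). Assume that for every y ∈ D(x) there is an integer n ≥ 1 with y^n ∈ C(x). Then C(x) = D(x); in particular C(x) is a convex subset of G. -/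
/-- Conjugation by `x` fixes `y ^ n`, hence fixes its unique `n`-th root `y`. -/
theorem Commute.of_pow_left {G : Type*} [Group G] [IsMulTorsionFree G] {x y : G} {n : ℕ}
    (hn : n ≠ 0) (h : Commute (y ^ n) x) : Commute y x := by
  have hconj : (x⁻¹ * y * x⁻¹⁻¹) ^ n = y ^ n := by
    rw [conj_pow, inv_inv, mul_assoc, h.eq, inv_mul_cancel_left]
  have hy : x⁻¹ * y * x = y := by simpa using pow_left_injective hn hconj
  show y * x = x * y
  simpa [mul_assoc] using congrArg (x * ·) hy

theorem statement_16 {G : Type*} [Group G] [LinearOrder G]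
    (hord : ∀ a b c d : G, a ≤ b → c * a * d ≤ c * b * d)
    (x : G) (C D : Set G)
    -- `C` is the centralizer of `x` and `D` is its convex hull
    (hC : C = {g : G | g * x = x * g})
    (hD : D = {y : G | ∃ h₁ ∈ C, ∃ h₂ ∈ C, h₁ ≤ y ∧ y ≤ h₂})
    -- every element of `D` has a power in `C`
    (hpow : ∀ y ∈ D, ∃ n : ℕ, 1 ≤ n ∧ y ^ n ∈ C) :
    -- then `C = D`; in particular `C` is convex
    C = D ∧ ∀ a ∈ C, ∀ b ∈ C, ∀ y : G, a ≤ y → y ≤ b → y ∈ C := by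
  -- bi-orderability makes `· ^ n` strictly monotone, so `G` is torsion-free
  have : MulLeftMono G := ⟨fun c a b h => by simpa using hord a b c 1 h⟩
  have : MulRightMono G := ⟨fun d a b h => by simpa using hord a b 1 d h⟩
  have hDC : D ⊆ C := fun y hy => by
    obtain ⟨n, hn, hyn⟩ := hpow y hy
    subst hC
    exact Commute.of_pow_left (by omega) hyn
  have hCD : C ⊆ D := fun y hy => hD ▸ ⟨y, hy, y, hy, le_rfl, le_rfl⟩
  exact ⟨hCD.antisymm hDC, fun a ha b hb y hay hyb => hDC (hD ▸ ⟨a, ha, b, hb, hay, hyb⟩)⟩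
end

section
/- Let G be a linearly ordered abelian group (written additively, with the order translation-invariant), let ν ∈ G with ν > 0, and let L = {g ∈ G : −ν < g < ν}. Let Z ⊆ L be a set such that: 0 ∈ Z; −g ∈ Z whenever g ∈ Z; and for all g₁, g₂ ∈ Z, either g₁ + g₂ ∈ Z or g₁ + g₂ ∉ L. Then there exists a subgroup H of G with Z = H ∩ L. -/
/-!
Let `H` be the subgroup generated by `Z`; since `Z = -Z`, every element of `H` is a sum of a
multiset of elements of `Z`. If such a sum lies in the interval `L`, two of its terms can be merged
into one element of `Z` without leaving `L`: a positive and a nonpositive term if both occur, and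
any two terms otherwise, whose sum then lies between one of them and the whole sum. Merging
repeatedly shows the sum is in `Z`.
-/

section

open Set

variable {G : Type*} [AddCommGroup G] [LinearOrder G] [IsOrderedAddMonoid G] {S Z : Set G}

lemma Multiset.exists_cons_cons_eq_and_add_mem [S.OrdConnected] {a b : G} {t : Multiset G}
    (hS : ∀ x ∈ a ::ₘ b ::ₘ t, x ∈ S) (hsum : (a ::ₘ b ::ₘ t).sum ∈ S) :
    ∃ x y u, a ::ₘ b ::ₘ t = x ::ₘ y ::ₘ u ∧ x + y ∈ S := by
  have ha : a ∈ S := hS a (by simp)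
  have hsum_eq : (a ::ₘ b ::ₘ t).sum = a + b + t.sum := by simp [add_assoc]
  by_cases hpos : ∃ x ∈ a ::ₘ b ::ₘ t, 0 < x
  · by_cases hnonpos : ∃ y ∈ a ::ₘ b ::ₘ t, y ≤ 0
    · obtain ⟨x, hx, hx0⟩ := hpos
      obtain ⟨y, hy, hy0⟩ := hnonpos
      have hyx : y ∈ (a ::ₘ b ::ₘ t).erase x :=
        (Multiset.mem_erase_of_ne (ne_of_lt (hy0.trans_lt hx0))).2 hy
      refine ⟨x, y, _, by rw [Multiset.cons_erase hyx, Multiset.cons_erase hx], ?_⟩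
      exact Set.Icc_subset S (hS y hy) (hS x hx)
        ⟨le_add_of_nonneg_left hx0.le, add_le_of_nonpos_right hy0⟩
    · push Not at hnonpos
      have ht : 0 ≤ t.sum := Multiset.sum_nonneg fun x hx => (hnonpos x (by simp [hx])).le
      refine ⟨a, b, t, rfl, Set.Icc_subset S ha hsum ⟨?_, ?_⟩⟩
      · exact le_add_of_nonneg_right (hnonpos b (by simp)).le
      · exact hsum_eq ▸ le_add_of_nonneg_right ht
  · push Not at hpos
    have ht : t.sum ≤ 0 :=
      (Multiset.sum_le_card_nsmul t 0 fun x hx => hpos x (by simp [hx])).trans_eq (nsmul_zero _)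
    refine ⟨a, b, t, rfl, Set.Icc_subset S hsum ha ⟨?_, ?_⟩⟩
    · exact hsum_eq ▸ add_le_of_nonpos_right ht
    · exact add_le_of_nonpos_right (hpos b (by simp))

lemma Multiset.sum_mem_of_add_mem_of_ordConnected [S.OrdConnected] (hZS : Z ⊆ S)
    (h0 : 0 ∈ Z) (hadd : ∀ x ∈ Z, ∀ y ∈ Z, x + y ∈ S → x + y ∈ Z)
    (s : Multiset G) (hsZ : ∀ x ∈ s, x ∈ Z) (hsS : s.sum ∈ S) : s.sum ∈ Z := by
  induction hn : Multiset.card s using Nat.strong_induction_on generalizing s with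
  | _ n ih =>
  rcases s.empty_or_exists_mem with rfl | ⟨a, ha⟩
  · simpa using h0
  obtain ⟨s', rfl⟩ := Multiset.exists_cons_of_mem ha
  rcases s'.empty_or_exists_mem with rfl | ⟨b, hb⟩
  · simpa using hsZ a (by simp)
  obtain ⟨t, rfl⟩ := Multiset.exists_cons_of_mem hb
  obtain ⟨x, y, u, hxyu, hxyS⟩ :=
    Multiset.exists_cons_cons_eq_and_add_mem (fun z hz => hZS (hsZ z hz)) hsS
  rw [hxyu] at hsZ hsS hn ⊢
  have hxyZ : x + y ∈ Z := hadd x (hsZ x (by simp)) y (hsZ y (by simp)) hxyS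
  have hmerge : ((x + y) ::ₘ u).sum = (x ::ₘ y ::ₘ u).sum := by simp [add_assoc]
  rw [← hmerge] at hsS ⊢
  refine ih _ (by simp [← hn]) _ (fun z hz => ?_) hsS rfl
  rcases Multiset.mem_cons.1 hz with rfl | hz
  exacts [hxyZ, hsZ z (by simp [hz])]

theorem AddSubgroup.closure_inter_eq_of_ordConnected [S.OrdConnected] (hZS : Z ⊆ S)
    (h0 : 0 ∈ Z) (hneg : ∀ x ∈ Z, -x ∈ Z)
    (hadd : ∀ x ∈ Z, ∀ y ∈ Z, x + y ∈ S → x + y ∈ Z) :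
    (closure Z : Set G) ∩ S = Z := by
  refine Subset.antisymm (fun g ⟨hgH, hgS⟩ => ?_) fun g hg => ⟨subset_closure hg, hZS hg⟩
  have hZ_symm : Z ∪ -Z = Z := union_eq_left.2 fun x hx => by simpa using hneg (-x) hx
  have hg : g ∈ AddSubmonoid.closure Z := by
    rw [← hZ_symm, ← closure_toAddSubmonoid]
    exact hgH
  obtain ⟨s, hsZ, rfl⟩ := AddSubmonoid.exists_multiset_of_mem_closure hg
  exact Multiset.sum_mem_of_add_mem_of_ordConnected hZS h0 hadd s hsZ hgS

end

theorem statement_18_general {G : Type*} [AddCommGroup G] [LinearOrder G] [IsOrderedAddMonoid G]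
    (ν : G) (L Z : Set G)
    (hL : L = Set.Ioo (-ν) ν) (hZL : Z ⊆ L)
    (h0 : (0 : G) ∈ Z)
    (hneg : ∀ g ∈ Z, -g ∈ Z)
    (hadd : ∀ g₁ ∈ Z, ∀ g₂ ∈ Z, g₁ + g₂ ∈ Z ∨ g₁ + g₂ ∉ L) :
    ∃ H : AddSubgroup G, Z = ↑H ∩ L := by
  subst hL
  refine ⟨AddSubgroup.closure Z, (AddSubgroup.closure_inter_eq_of_ordConnected hZL h0 hneg ?_).symm⟩
  exact fun x hx y hy hxy => (hadd x hx y hy).resolve_right (not_not.2 hxy)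

theorem statement_18 {G : Type*} [AddCommGroup G] [LinearOrder G] [IsOrderedAddMonoid G]
    (ν : G) (hν : 0 < ν) (L Z : Set G)
    (hL : L = Set.Ioo (-ν) ν) (hZL : Z ⊆ L)
    (h0 : (0 : G) ∈ Z)
    (hneg : ∀ g ∈ Z, -g ∈ Z)
    (hadd : ∀ g₁ ∈ Z, ∀ g₂ ∈ Z, g₁ + g₂ ∈ Z ∨ g₁ + g₂ ∉ L) :
    ∃ H : AddSubgroup G, Z = ↑H ∩ L :=
  statement_18_general ν L Z hL hZL h0 hneg hadd
end
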